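/- With the setup of the symmetric case (previous context), P_s(x) is strictly decreasing in x for x > 0 when N ≥ 2 and q ∈ (0,1). -/

import Mathlib

/-! For `x ≥ 0` one has `f_k(x) = f_1(x) (x/μ)^(k-1) / (k-1)!`, so cancelling `f_1(x)` writes
`P_s(x)` as a positive constant divided by a polynomial in `x/μ` with positive coefficients. For
`N ≥ 2` this polynomial has a non-constant term (`k = 2`), hence is strictly increasing on
`[0, ∞)`. -/

open Finset

/-- The Erlang density with shape `k` and mean parameter `μ` (rate `1/μ`). -/
noncomputable def erlangPDF (k : ℕ) (μ x : ℝ) : ℝ :=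
  if 0 ≤ x then x ^ (k - 1) * Real.exp (-x / μ) / (μ ^ k * (Nat.factorial (k - 1))) else 0

/-- The symmetric successful decoding probability
`P_s(x) = N*q*(1-q)^(N-1)*f_1(x) / ∑_{k=1}^N C(N,k)*q^k*(1-q)^(N-k)*f_k(x)`. -/
noncomputable def Ps (N : ℕ) (q μ x : ℝ) : ℝ :=
  (N * q * (1 - q) ^ (N - 1) * erlangPDF 1 μ x) /
    (∑ k ∈ Finset.Icc 1 N, (N.choose k : ℝ) * q ^ k * (1 - q) ^ (N - k) * erlangPDF k μ x)

theorem erlangPDF_eq_erlangPDF_one_mul {k : ℕ} (hk : 1 ≤ k) {μ x : ℝ} (hx : 0 ≤ x) :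
    erlangPDF k μ x = erlangPDF 1 μ x * ((x / μ) ^ (k - 1) / (k - 1).factorial) := by
  obtain ⟨j, rfl⟩ := Nat.exists_eq_add_of_le' hk
  simp only [erlangPDF, if_pos hx, Nat.add_sub_cancel, Nat.sub_self, pow_zero, pow_one,
    Nat.factorial_zero, Nat.cast_one, div_pow]
  ring

theorem erlangPDF_one_pos {μ x : ℝ} (hμ : 0 < μ) (hx : 0 ≤ x) : 0 < erlangPDF 1 μ x := by
  simp only [erlangPDF, if_pos hx, Nat.sub_self, pow_zero, pow_one, Nat.factorial_zero,
    Nat.cast_one, mul_one, one_mul]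
  positivity

theorem strictMonoOn_sum_mul_pow {ι : Type*} {s : Finset ι} {c : ι → ℝ} {n : ι → ℕ}
    (hc : ∀ i ∈ s, 0 ≤ c i) (hpos : ∃ i ∈ s, n i ≠ 0 ∧ 0 < c i) :
    StrictMonoOn (fun y => ∑ i ∈ s, c i * y ^ n i) (Set.Ici 0) := by
  intro a ha b _ hab
  obtain ⟨i, hi, hn, hci⟩ := hpos
  refine sum_lt_sum (fun j hj => ?_) ⟨i, hi, ?_⟩
  · exact mul_le_mul_of_nonneg_left (pow_le_pow_left₀ ha hab.le _) (hc j hj)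
  · exact mul_lt_mul_of_pos_left (pow_lt_pow_left₀ hab ha hn) hci

/-- The denominator of `Ps` divided by `erlangPDF 1 μ x`. -/
noncomputable def mixtureDensityRatio (N : ℕ) (q μ x : ℝ) : ℝ :=
  ∑ k ∈ Icc 1 N, (N.choose k * q ^ k * (1 - q) ^ (N - k) / (k - 1).factorial) * (x / μ) ^ (k - 1)

theorem Ps_eq_div_mixtureDensityRatio (N : ℕ) (q : ℝ) {μ x : ℝ} (hμ : 0 < μ) (hx : 0 ≤ x) :
    Ps N q μ x = N * q * (1 - q) ^ (N - 1) / mixtureDensityRatio N q μ x := by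
  have hsum : ∑ k ∈ Icc 1 N, (N.choose k : ℝ) * q ^ k * (1 - q) ^ (N - k) * erlangPDF k μ x =
      erlangPDF 1 μ x * mixtureDensityRatio N q μ x := by
    rw [mixtureDensityRatio, mul_sum]
    refine sum_congr rfl fun k hk => ?_
    rw [erlangPDF_eq_erlangPDF_one_mul (mem_Icc.1 hk).1 hx]
    ring
  rw [Ps, hsum, mul_comm (erlangPDF 1 μ x), mul_div_mul_right _ _ (erlangPDF_one_pos hμ hx).ne']

theorem binomial_weight_pos {N k : ℕ} (hk : k ≤ N) {q : ℝ} (hq : q ∈ Set.Ioo 0 1) :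
    0 < (N.choose k * q ^ k * (1 - q) ^ (N - k) : ℝ) := by
  have : (0 : ℝ) < N.choose k := by exact_mod_cast Nat.choose_pos hk
  have : 0 < 1 - q := sub_pos.2 hq.2
  have := hq.1
  positivity

theorem mixtureDensityRatio_strictMonoOn {N : ℕ} (hN : 2 ≤ N) {q μ : ℝ} (hq : q ∈ Set.Ioo 0 1)
    (hμ : 0 < μ) : StrictMonoOn (mixtureDensityRatio N q μ) (Set.Ici 0) := by
  have hpoly := strictMonoOn_sum_mul_pow (s := Icc 1 N) (n := fun k => k - 1)
    (c := fun k => N.choose k * q ^ k * (1 - q) ^ (N - k) / (k - 1).factorial)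
    (fun k hk => (div_pos (binomial_weight_pos (mem_Icc.1 hk).2 hq) (by positivity)).le)
    ⟨2, mem_Icc.2 ⟨by norm_num, hN⟩, by norm_num,
      div_pos (binomial_weight_pos hN hq) (by positivity)⟩
  exact hpoly.comp (fun a _ b _ hab => div_lt_div_of_pos_right hab hμ)
    fun x hx => div_nonneg hx hμ.le

theorem mixtureDensityRatio_pos {N : ℕ} (hN : 1 ≤ N) {q μ : ℝ} (hq : q ∈ Set.Ioo 0 1)
    (hμ : 0 < μ) {x : ℝ} (hx : 0 ≤ x) : 0 < mixtureDensityRatio N q μ x := by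
  refine sum_pos' (fun k hk => ?_) ⟨1, mem_Icc.2 ⟨le_rfl, hN⟩, ?_⟩
  · have := binomial_weight_pos (mem_Icc.1 hk).2 hq
    positivity
  · simpa using binomial_weight_pos hN hq

/-- In the symmetric setting, `P_s(x)` is strictly decreasing in `x` on `(0, ∞)` when
`N ≥ 2` and `q ∈ (0,1)`. -/
theorem Ps_strictAntiOn (N : ℕ) (hN : 2 ≤ N) (q μ : ℝ) (hq : q ∈ Set.Ioo (0 : ℝ) 1)
    (hμ : 0 < μ) : StrictAntiOn (fun x => Ps N q μ x) (Set.Ioi 0) := by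
  intro a ha b hb hab
  simp only [Ps_eq_div_mixtureDensityRatio N q hμ (le_of_lt ha),
    Ps_eq_div_mixtureDensityRatio N q hμ (le_of_lt hb)]
  refine div_lt_div_of_pos_left (by simpa using binomial_weight_pos (k := 1) (by omega) hq)
    (mixtureDensityRatio_pos (by omega) hq hμ (le_of_lt ha))
    (mixtureDensityRatio_strictMonoOn hN hq hμ (Set.Ioi_subset_Ici_self ha)
      (Set.Ioi_subset_Ici_self hb) hab)
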